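/- Let w be an inverse Lyndon word and ℓ a nonempty anti-Lyndon word such that ℓw is not an inverse Lyndon word. Then for every k ≥ 1, w is the longest suffix of ℓ^k w that is an inverse Lyndon word. -/

import Mathlib

/-!
Write `x ≪ y` (`LLt x y`) when `x` and `y` differ at a position inside both words, with the
smaller letter in `x`; equivalently `x ++ s ≺ y ++ t` for all `s`, `t`, so `≪` is transitive.
The hypothesis that `ℓw` is not inverse Lyndon forces `ℓ ≪ w`. Since `ℓ` is anti-Lyndon, each
nonempty proper suffix of `ℓ` is `≪ ℓ`, and every nonempty suffix `t` of `ℓ^k` begins with a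
nonempty suffix of `ℓ`. Hence `t w ≺ w`, while `w ≺ t w` if `t w` is inverse Lyndon.
-/

open List

variable {α : Type*} [LinearOrder α]

/-- `x ≺ y`: lexicographic order on words. -/
def Prec (x y : List α) : Prop := List.Lex (· < ·) x y

/-- Lexicographic order induced by the inverse alphabet order. -/
def PrecIn (x y : List α) : Prop := List.Lex (fun a b : α => b < a) x y

/-- `x ≪ y`: `x ≺ y` and `x` is not a proper prefix of `y`. -/
def LLt (x y : List α) : Prop := Prec x y ∧ ¬ (x <+: y ∧ x ≠ y)

/-- `b` is a border of `w`: a proper prefix and a suffix of `w`. -/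
def IsBorder (b w : List α) : Prop := b <+: w ∧ b ≠ w ∧ b <:+ w

/-- `w` has no nonempty border. -/
def Unbordered (w : List α) : Prop := ∀ b : List α, b ≠ [] → ¬ IsBorder b w

/-- Lyndon word: smaller than each nonempty proper suffix. -/
def IsLyndon (w : List α) : Prop :=
  w ≠ [] ∧ ∀ s : List α, s <:+ w → s ≠ w → s ≠ [] → Prec w s

/-- Anti-Lyndon word: Lyndon w.r.t. the inverse lexicographic order. -/
def IsAntiLyndon (w : List α) : Prop :=
  w ≠ [] ∧ ∀ s : List α, s <:+ w → s ≠ w → s ≠ [] → PrecIn w s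

/-- Inverse Lyndon word: each nonempty proper suffix is smaller. -/
def IsInvLyndon (w : List α) : Prop :=
  w ≠ [] ∧ ∀ s : List α, s <:+ w → s ≠ w → s ≠ [] → Prec s w

/-- Inverse Lyndon factorization of `w`. -/
def IsInvLyndonFact (ms : List (List α)) (w : List α) : Prop :=
  ms ≠ [] ∧ ms.flatten = w ∧ (∀ m ∈ ms, IsInvLyndon m) ∧ List.Chain' LLt ms

/-- The border property of a factorization. -/
def BorderProp (ms : List (List α)) : Prop :=
  List.Chain' (fun u v => ∀ b : List α, b ≠ [] → IsBorder b u → ¬ b <+: v) ms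

theorem List.Lex.prefix_or_exists_split {β : Type*} {r : β → β → Prop} {x y : List β}
    (h : List.Lex r x y) :
    x <+: y ∨ ∃ p a b u v, x = p ++ a :: u ∧ y = p ++ b :: v ∧ r a b := by
  induction h with
  | nil => exact Or.inl (nil_prefix)
  | @rel a l₁ b l₂ hab => exact Or.inr ⟨[], a, b, l₁, l₂, rfl, rfl, hab⟩
  | @cons a l₁ l₂ _ ih =>
      rcases ih with ⟨m, rfl⟩ | ⟨p, a', b', u, v, rfl, rfl, hr⟩
      · exact Or.inl ⟨m, rfl⟩
      · exact Or.inr ⟨a :: p, a', b', u, v, rfl, rfl, hr⟩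

theorem List.lt_of_append_lt_append_left {x y : List α} (l : List α) (h : l ++ x < l ++ y) :
    x < y := by
  induction l with
  | nil => exact h
  | cons a l ih => exact ih (List.lex_cons_iff.mp h)

theorem append_cons_append_lt {a b : α} (hab : a < b) (p u v s t : List α) :
    p ++ a :: u ++ s < p ++ b :: v ++ t := by
  simpa using Lex.append_left _ (Lex.rel (l₁ := u ++ s) (l₂ := v ++ t) hab) p

section LLt

variable {x y z : List α}

theorem LLt.exists_split (h : LLt x y) :
    ∃ p a b u v, x = p ++ a :: u ∧ y = p ++ b :: v ∧ a < b :=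
  h.1.prefix_or_exists_split.resolve_left fun hp => h.2 ⟨hp, fun he => List.lt_irrefl y (he ▸ h.1)⟩

theorem lLt_iff_forall_append_lt : LLt x y ↔ ∀ s t, x ++ s < y ++ t := by
  constructor
  · intro h s t
    obtain ⟨p, a, b, u, v, rfl, rfl, hab⟩ := h.exists_split
    exact append_cons_append_lt hab p u v s t
  · intro h
    refine ⟨(by simpa using h [] [] : x < y), ?_⟩
    rintro ⟨⟨m, rfl⟩, -⟩
    exact List.lt_irrefl (x ++ m) (by simpa using h m [])

theorem LLt.append_lt (h : LLt x y) (s t : List α) : x ++ s < y ++ t :=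
  lLt_iff_forall_append_lt.1 h s t

theorem LLt.trans (hxy : LLt x y) (hyz : LLt y z) : LLt x z :=
  lLt_iff_forall_append_lt.2 fun s t =>
    List.lt_trans (by simpa using hxy.append_lt s []) (by simpa using hyz.append_lt [] t)

theorem lLt_of_split {a b : α} (hab : a < b) (p u v : List α) :
    LLt (p ++ a :: u) (p ++ b :: v) :=
  lLt_iff_forall_append_lt.2 (append_cons_append_lt hab p u v)

theorem lLt_or_prefix_of_lt (h : x < y) : LLt x y ∨ x <+: y :=
  or_iff_not_imp_right.2 fun hp => ⟨h, fun hp' => hp hp'.1⟩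

end LLt

theorem IsAntiLyndon.lLt_of_suffix {l x : List α} (hl : IsAntiLyndon l) (hx : x <:+ l)
    (hne : x ≠ l) (hnil : x ≠ []) : LLt x l := by
  rcases (hl.2 x hx hne hnil).prefix_or_exists_split with hp | ⟨p, a, b, u, v, rfl, rfl, hba⟩
  · exact absurd (hp.eq_of_length (le_antisymm hp.length_le hx.length_le)).symm hne
  · exact lLt_of_split hba p v u

theorem append_lt_of_not_isInvLyndon_append {l w : List α} (hw : IsInvLyndon w)
    (hl : IsAntiLyndon l) (h : ¬ IsInvLyndon (l ++ w)) : l ++ w < w := by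
  obtain ⟨u, hu, hne, hnil, hnlt⟩ :
      ∃ u, u <:+ l ++ w ∧ u ≠ l ++ w ∧ u ≠ [] ∧ ¬ u < l ++ w := by
    by_contra! hc
    exact h ⟨by simp [hw.1], hc⟩
  have hlt : l ++ w < u := ((Std.lt_trichotomy u (l ++ w)).resolve_left hnlt).resolve_left hne
  rcases le_or_gt u.length w.length with hlen | hlen
  · have huw : u <:+ w := suffix_of_suffix_length_le hu (suffix_append l w) hlen
    rcases eq_or_ne u w with rfl | huw'
    · exact hlt
    · exact List.lt_trans hlt (hw.2 u huw huw' hnil)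
  · obtain ⟨v, rfl⟩ := suffix_of_suffix_length_le (suffix_append l w) hu hlen.le
    have hvl : LLt v l :=
      hl.lLt_of_suffix (suffix_append_self_iff.1 hu) (by rintro rfl; exact hne rfl)
        (by rintro rfl; simp at hlen)
    exact absurd (hvl.append_lt w w) hnlt

theorem IsInvLyndon.lLt_of_append_lt {l w : List α} (hw : IsInvLyndon w) (h : l ++ w < w) :
    LLt l w := by
  have hl : l ≠ [] := by rintro rfl; exact List.lt_irrefl w h
  rcases Std.lt_trichotomy l w with hlt | rfl | hgt
  · rcases lLt_or_prefix_of_lt hlt with hlw | ⟨r, rfl⟩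
    · exact hlw
    · have hr : l ++ r < r := List.lt_of_append_lt_append_left l h
      rcases eq_or_ne r [] with rfl | hrnil
      · exact absurd hr (List.not_lt_nil _)
      have hrw : r ≠ l ++ r := fun he => hl (by simpa using congrArg length he)
      exact absurd hr (List.lt_asymm (hw.2 r (suffix_append l r) hrw hrnil))
  · exact absurd h (prefix_append l l).le
  · rcases lLt_or_prefix_of_lt hgt with hwl | hwl
    · exact absurd h (List.lt_asymm (by simpa using hwl.append_lt [] w))
    · exact absurd h (hwl.trans (prefix_append l w)).le

theorem exists_append_of_suffix_flatten_replicate {β : Type*} {l t : List β} {k : ℕ}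
    (ht : t <:+ (replicate k l).flatten) (hnil : t ≠ []) :
    ∃ x y, x <:+ l ∧ x ≠ [] ∧ t = x ++ y := by
  induction k generalizing t with
  | zero => simp_all
  | succ k ih =>
    rw [replicate_succ, flatten_cons] at ht
    rcases le_or_gt t.length (replicate k l).flatten.length with hlen | hlen
    · exact ih (suffix_of_suffix_length_le ht (suffix_append _ _) hlen) hnil
    · obtain ⟨x, rfl⟩ := suffix_of_suffix_length_le (suffix_append _ _) ht hlen.le
      exact ⟨x, _, suffix_append_self_iff.1 ht, by rintro rfl; simp at hlen, rfl⟩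

theorem IsAntiLyndon.append_lt_of_suffix_flatten_replicate {l w t : List α} {k : ℕ}
    (hl : IsAntiLyndon l) (hlw : LLt l w) (ht : t <:+ (replicate k l).flatten) (hnil : t ≠ [])
    (z : List α) : t ++ z < w := by
  obtain ⟨x, y, hx, hxnil, rfl⟩ := exists_append_of_suffix_flatten_replicate ht hnil
  have hxw : LLt x w := by
    rcases eq_or_ne x l with rfl | hne
    · exact hlw
    · exact (hl.lLt_of_suffix hx hne hxnil).trans hlw
  simpa using hxw.append_lt (y ++ z) []

theorem stmt12_general (w l : List α) (hw : IsInvLyndon w)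
    (hl : IsAntiLyndon l) (h : ¬ IsInvLyndon (l ++ w)) :
    ∀ k : ℕ, 1 ≤ k →
      w <:+ (List.replicate k l).flatten ++ w ∧
      (∀ s : List α, s <:+ (List.replicate k l).flatten ++ w → IsInvLyndon s →
        s.length ≤ w.length) := by
  have hlw : LLt l w := hw.lLt_of_append_lt (append_lt_of_not_isInvLyndon_append hw hl h)
  intro k _
  refine ⟨suffix_append _ _, fun s hs hs_inv => ?_⟩
  by_contra! hlen
  obtain ⟨t, rfl⟩ := suffix_of_suffix_length_le (suffix_append _ w) hs hlen.le
  have htnil : t ≠ [] := by rintro rfl; simp at hlen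
  have hwt : w ≠ t ++ w := fun he => htnil (by simpa using congrArg length he)
  exact List.lt_asymm (hl.append_lt_of_suffix_flatten_replicate hlw
    (suffix_append_self_iff.1 hs) htnil w) (hs_inv.2 w (suffix_append t w) hwt hw.1)

theorem stmt12 (w l : List α) (hw : IsInvLyndon w) (hlne : l ≠ [])
    (hl : IsAntiLyndon l) (h : ¬ IsInvLyndon (l ++ w)) :
    ∀ k : ℕ, 1 ≤ k →
      w <:+ (List.replicate k l).flatten ++ w ∧
      (∀ s : List α, s <:+ (List.replicate k l).flatten ++ w → IsInvLyndon s →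
        s.length ≤ w.length) :=
  stmt12_general w l hw hl h
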